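/- arXiv:1405.4383 — 2 statements merged into one kernel-verified Lean document; each statement's English description precedes it below -/
import Mathlib

section
/- Let f be analytic on the open unit disk D with ‖f‖_∞ := sup_{z∈D}|f(z)| < ∞. Then lim_{n→∞} E_n(f)^{1/n} = 0 if and only if there exists an entire function F : ℂ → ℂ with F(z) = f(z) for all z ∈ D. -/
open Filter MeasureTheory

noncomputable section

/-- Iterated natural logarithm: `iterLog 0 x = x`, `iterLog (q+1) x = log (iterLog q x)`. -/
def iterLog : ℕ → ℝ → ℝ
  | 0, x => x
  | q + 1, x => Real.log (iterLog q x)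

/-- Maximum modulus of `F` on the closed disk of radius `r`. -/
def maxMod (F : ℂ → ℂ) (r : ℝ) : ℝ :=
  sSup ((fun z => ‖F z‖) '' Metric.closedBall (0 : ℂ) r)

/-- Generalized order of index `q` of an entire function. -/
def genOrder (q : ℕ) (F : ℂ → ℂ) : EReal :=
  limsup (fun r : ℝ => ((iterLog q (maxMod F r) / Real.log r : ℝ) : EReal)) atTop

/-- Generalized type of index `q` of an entire function, relative to the order `ρ`. -/
def genType (q : ℕ) (F : ℂ → ℂ) (ρ : ℝ) : EReal :=
  limsup (fun r : ℝ => ((iterLog (q - 1) (maxMod F r) / r ^ ρ : ℝ) : EReal)) atTop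

/-- Sup norm on the open unit disk. -/
def supNorm (f : ℂ → ℂ) : ℝ :=
  sSup ((fun z => ‖f z‖) '' Metric.ball (0 : ℂ) 1)

/-- Best sup-norm approximation of `f` by polynomials of degree at most `n - 1`. -/
def En (f : ℂ → ℂ) (n : ℕ) : ℝ :=
  sInf { e : ℝ | ∃ P : Polynomial ℂ, P.degree < (n : WithBot ℕ) ∧
    e = supNorm (fun z => f z - P.eval z) }

/-!
Subtracting a polynomial of degree `< n` does not change the `n`-th Taylor coefficient `a n` of `f`
at `0`, so Cauchy's estimate on the unit disk gives `‖a n‖ ≤ E_n(f)`. Hence if `E_n(f)^{1/n} → 0`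
the Taylor series of `f` has infinite radius of convergence and its sum is the entire extension.
Conversely, the Taylor coefficients of an entire function decay faster than any geometric
sequence, and the `n`-th partial sum of the series approximates `f` on the disk within the tail
`∑_{k ≥ n} ‖a k‖`.
-/

open Metric Polynomial Set Topology

theorem tendsto_rpow_one_div_natCast_zero_iff {u : ℕ → ℝ} (hu : ∀ n, 0 ≤ u n) :
    Tendsto (fun n : ℕ => u n ^ (1 / (n : ℝ))) atTop (𝓝 0) ↔
      ∀ ε > 0, ∀ᶠ n in atTop, u n ≤ ε ^ n := by
  have root_le_iff : ∀ ε > 0, ∀ n ≠ 0, u n ^ (1 / (n : ℝ)) ≤ ε ↔ u n ≤ ε ^ n := by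
    intro ε hε n hn
    rw [one_div, Real.rpow_inv_le_iff_of_pos (hu n) hε.le (by positivity), Real.rpow_natCast]
  constructor
  · intro h ε hε
    filter_upwards [h.eventually (eventually_le_nhds hε), eventually_ne_atTop 0] with n hle hn
    exact (root_le_iff ε hε n hn).1 hle
  · intro h
    refine tendsto_order.2 ⟨fun a ha => Eventually.of_forall fun n =>
      ha.trans_le (Real.rpow_nonneg (hu n) _), fun a ha => ?_⟩
    filter_upwards [h (a / 2) (half_pos ha), eventually_ne_atTop 0] with n hle hn
    exact ((root_le_iff _ (half_pos ha) n hn).2 hle).trans_lt (half_lt_self ha)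

theorem Complex.norm_iteratedDeriv_le_of_forall_mem_ball_norm_le {F : Type*}
    [NormedAddCommGroup F] [NormedSpace ℂ F] [CompleteSpace F] {f : ℂ → F} {c : ℂ} {R C : ℝ}
    (n : ℕ) (hR : 0 < R) (hf : DifferentiableOn ℂ f (ball c R))
    (hC : ∀ z ∈ ball c R, ‖f z‖ ≤ C) :
    ‖iteratedDeriv n f c‖ ≤ n.factorial * C / R ^ n := by
  have on_smaller_circle : ∀ r ∈ Ioo 0 R, ‖iteratedDeriv n f c‖ ≤ n.factorial * C / r ^ n :=
    fun r hr => norm_iteratedDeriv_le_of_forall_mem_sphere_norm_le n hr.1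
      (hf.mono (closure_ball_subset_closedBall.trans (closedBall_subset_ball hr.2))).diffContOnCl
      fun z hz => hC z (sphere_subset_closedBall.trans (closedBall_subset_ball hr.2) hz)
  have hlim : Tendsto (fun r : ℝ => n.factorial * C / r ^ n) (𝓝[<] R)
      (𝓝 (n.factorial * C / R ^ n)) :=
    (continuousAt_const.div (continuous_pow n).continuousAt (pow_ne_zero n hR.ne')).tendsto.mono_left
      nhdsWithin_le_nhds
  exact ge_of_tendsto hlim (mem_of_superset (Ioo_mem_nhdsLT hR) on_smaller_circle)

theorem Polynomial.iteratedDeriv_eval {𝕜 : Type*} [NontriviallyNormedField 𝕜] (P : 𝕜[X])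
    (n : ℕ) : iteratedDeriv n (fun x => P.eval x) = fun x => (derivative^[n] P).eval x := by
  rw [iteratedDeriv_eq_iterate]
  induction n generalizing P with
  | zero => rfl
  | succ n ih =>
    have hderiv : deriv (fun x => P.eval x) = fun x => (derivative P).eval x :=
      by ext; exact P.deriv
    rw [Function.iterate_succ_apply, Function.iterate_succ_apply, hderiv, ih]

theorem Polynomial.iteratedDeriv_eval_eq_zero {𝕜 : Type*} [NontriviallyNormedField 𝕜]
    {P : 𝕜[X]} {n : ℕ} (hP : P.degree < n) (x : 𝕜) :
    iteratedDeriv n (fun x => P.eval x) x = 0 := by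
  rcases eq_or_ne P 0 with rfl | hP0
  · simp
  · rw [P.iteratedDeriv_eval, iterate_derivative_eq_zero ((natDegree_lt_iff_degree_lt hP0).2 hP)]
    exact eval_zero

def taylorCoeff (f : ℂ → ℂ) (n : ℕ) : ℂ :=
  (n.factorial : ℂ)⁻¹ * iteratedDeriv n f 0

theorem taylorCoeff_sub_polynomial {f : ℂ → ℂ} (hf : AnalyticAt ℂ f 0) {P : ℂ[X]} {n : ℕ}
    (hP : P.degree < n) : taylorCoeff (fun z => f z - P.eval z) n = taylorCoeff f n := by
  rw [taylorCoeff, taylorCoeff, iteratedDeriv_fun_sub hf.contDiffAt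
    (P.differentiable.analyticAt 0).contDiffAt, iteratedDeriv_eval_eq_zero hP, sub_zero]

theorem hasSum_taylorCoeff_mul_pow {f : ℂ → ℂ} {r : ℝ} (hf : DifferentiableOn ℂ f (ball 0 r))
    {z : ℂ} (hz : z ∈ ball 0 r) : HasSum (fun n => taylorCoeff f n * z ^ n) (f z) := by
  simpa [taylorCoeff, mul_comm, mul_left_comm] using Complex.hasSum_taylorSeries_on_ball hf hz

theorem Differentiable.eventually_norm_taylorCoeff_le_pow {F : ℂ → ℂ} (hF : Differentiable ℂ F)
    {ε : ℝ} (hε : 0 < ε) : ∀ᶠ n in atTop, ‖taylorCoeff F n‖ ≤ ε ^ n := by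
  have hsum := hasSum_taylorCoeff_mul_pow (r := ε⁻¹ + 1) hF.differentiableOn
    (z := (ε⁻¹ : ℝ)) (by simp [abs_of_pos hε])
  filter_upwards [hsum.summable.tendsto_atTop_zero.norm.eventually (eventually_le_nhds (norm_zero (E := ℂ) ▸ one_pos))]
    with n hn
  rw [norm_mul, norm_pow, Complex.norm_real, Real.norm_of_nonneg (inv_pos.2 hε).le, inv_pow,
    ← div_eq_mul_inv, div_le_one (pow_pos hε n)] at hn
  exact hn

theorem supNorm_nonneg (g : ℂ → ℂ) : 0 ≤ supNorm g :=
  Real.sSup_nonneg (by rintro _ ⟨z, -, rfl⟩; positivity)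

theorem norm_le_supNorm {g : ℂ → ℂ} (hg : BddAbove ((fun z => ‖g z‖) '' ball (0 : ℂ) 1))
    {z : ℂ} (hz : z ∈ ball (0 : ℂ) 1) : ‖g z‖ ≤ supNorm g :=
  le_csSup hg ⟨z, hz, rfl⟩

theorem supNorm_le {g : ℂ → ℂ} {C : ℝ} (hC0 : 0 ≤ C) (hC : ∀ z ∈ ball (0 : ℂ) 1, ‖g z‖ ≤ C) :
    supNorm g ≤ C :=
  Real.sSup_le (by rintro _ ⟨z, hz, rfl⟩; exact hC z hz) hC0

theorem En_nonneg (f : ℂ → ℂ) (n : ℕ) : 0 ≤ En f n :=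
  Real.sInf_nonneg (by rintro _ ⟨P, -, rfl⟩; exact supNorm_nonneg _)

theorem En_le_supNorm_sub (f : ℂ → ℂ) {P : ℂ[X]} {n : ℕ} (hP : P.degree < n) :
    En f n ≤ supNorm (fun z => f z - P.eval z) :=
  csInf_le ⟨0, by rintro _ ⟨Q, -, rfl⟩; exact supNorm_nonneg _⟩ ⟨P, hP, rfl⟩

theorem le_En {f : ℂ → ℂ} {n : ℕ} {c : ℝ}
    (h : ∀ P : ℂ[X], P.degree < n → c ≤ supNorm (fun z => f z - P.eval z)) : c ≤ En f n :=
  le_csInf ⟨_, 0, WithBot.bot_lt_coe n, rfl⟩ (by rintro _ ⟨P, hP, rfl⟩; exact h P hP)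

theorem BddAbove.norm_sub_polynomial {f : ℂ → ℂ} {s : Set ℂ}
    (hf : BddAbove ((fun z => ‖f z‖) '' s)) (hs : Bornology.IsBounded s) (P : ℂ[X]) :
    BddAbove ((fun z => ‖f z - P.eval z‖) '' s) := by
  obtain ⟨M, hM⟩ := hf
  obtain ⟨K, hK⟩ := hs.isCompact_closure.exists_bound_of_continuousOn P.continuous.continuousOn
  refine ⟨M + K, ?_⟩
  rintro _ ⟨z, hz, rfl⟩
  exact (norm_sub_le _ _).trans (add_le_add (hM ⟨z, hz, rfl⟩) (hK z (subset_closure hz)))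

theorem norm_taylorCoeff_le_En {f : ℂ → ℂ} (hf : AnalyticOnNhd ℂ f (ball 0 1))
    (hb : BddAbove ((fun z => ‖f z‖) '' ball (0 : ℂ) 1)) (n : ℕ) :
    ‖taylorCoeff f n‖ ≤ En f n := by
  refine le_En fun P hP => ?_
  have cauchy := Complex.norm_iteratedDeriv_le_of_forall_mem_ball_norm_le n one_pos
    (hf.differentiableOn.sub P.differentiableOn)
    fun z hz => norm_le_supNorm (hb.norm_sub_polynomial isBounded_ball P) hz
  rw [one_pow, div_one, ← inv_mul_le_iff₀ (by positivity)] at cauchy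
  rw [← taylorCoeff_sub_polynomial (hf 0 (mem_ball_self one_pos)) hP, taylorCoeff, norm_mul,
    norm_inv, Complex.norm_natCast]
  exact cauchy

theorem exists_differentiable_hasSum_of_norm_le_pow {a : ℕ → ℂ}
    (ha : ∀ ε > 0, ∀ᶠ n in atTop, ‖a n‖ ≤ ε ^ n) :
    ∃ F : ℂ → ℂ, Differentiable ℂ F ∧ ∀ z, HasSum (fun n => a n * z ^ n) (F z) := by
  set p := FormalMultilinearSeries.ofScalars ℂ a
  have hp : p.radius = ⊤ := ENNReal.eq_top_of_forall_nnreal_le fun r =>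
    p.le_radius_of_eventually_le 1 <| by
      filter_upwards [ha (r + 1)⁻¹ (by positivity)] with n hn
      rw [FormalMultilinearSeries.ofScalars_norm]
      calc ‖a n‖ * r ^ n ≤ (r + 1 : ℝ)⁻¹ ^ n * r ^ n := by gcongr
        _ = (r / (r + 1 : ℝ)) ^ n := by rw [← mul_pow, inv_mul_eq_div]
        _ ≤ 1 := pow_le_one₀ (by positivity) ((div_le_one (by positivity)).2 (by linarith))
  have hF : HasFPowerSeriesOnBall p.sum p 0 ⊤ :=
    hp ▸ p.hasFPowerSeriesOnBall (hp ▸ ENNReal.zero_lt_top)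
  refine ⟨p.sum, fun z => (hF.analyticAt_of_mem (by simp)).differentiableAt, fun z => ?_⟩
  simpa [p, FormalMultilinearSeries.ofScalars_apply_eq, mul_comm] using hF.hasSum (y := z) (by simp)

theorem En_le_of_hasSum {f : ℂ → ℂ} {b : ℕ → ℂ}
    (hsum : ∀ z ∈ ball (0 : ℂ) 1, HasSum (fun k => b k * z ^ k) (f z)) {δ : ℝ} (hδ0 : 0 ≤ δ)
    (hδ1 : δ < 1) {n : ℕ} (hb : ∀ k ≥ n, ‖b k‖ ≤ δ ^ k) : En f n ≤ δ ^ n / (1 - δ) := by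
  set P : ℂ[X] := ∑ i : Fin n, C (b i) * X ^ (i : ℕ)
  have hPz : ∀ z, P.eval z = ∑ k ∈ Finset.range n, b k * z ^ k := fun z => by
    simp [P, eval_finsetSum, Fin.sum_univ_eq_sum_range (fun k => b k * z ^ k)]
  refine (En_le_supNorm_sub f (P := P) (degree_sum_fin_lt _)).trans
    (supNorm_le (div_nonneg (pow_nonneg hδ0 n) (sub_pos.2 hδ1).le) fun z hz => ?_)
  have htail : HasSum (fun k => b (k + n) * z ^ (k + n)) (f z - P.eval z) := by
    rw [hPz]
    exact (hasSum_nat_add_iff' n).2 (hsum z hz)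
  have hgeom : HasSum (fun k => δ ^ (k + n)) (δ ^ n / (1 - δ)) := by
    simpa [pow_add, div_eq_mul_inv, mul_comm] using
      (hasSum_geometric_of_lt_one hδ0 hδ1).mul_left (δ ^ n)
  refine htail.norm_le_of_bounded hgeom fun k => ?_
  rw [norm_mul, norm_pow]
  exact (mul_le_of_le_one_right (norm_nonneg _)
    (pow_le_one₀ (norm_nonneg z) (mem_ball_zero_iff.1 hz).le)).trans (hb _ (Nat.le_add_left n k))

theorem two_mul_half_pow_le_pow {m : ℝ} (hm : 0 ≤ m) {n : ℕ} (hn : n ≠ 0) :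
    2 * (m / 2) ^ n ≤ m ^ n := by
  obtain ⟨k, rfl⟩ := Nat.exists_eq_succ_of_ne_zero hn
  rw [pow_succ, pow_succ, ← mul_assoc, mul_comm 2, mul_assoc, mul_div_cancel₀ m two_ne_zero]
  gcongr
  linarith

theorem tendsto_En_rpow_of_eqOn_ball {f F : ℂ → ℂ} (hF : Differentiable ℂ F)
    (hFf : ∀ z ∈ ball (0 : ℂ) 1, F z = f z) :
    Tendsto (fun n : ℕ => En f n ^ (1 / (n : ℝ))) atTop (𝓝 0) := by
  rw [tendsto_rpow_one_div_natCast_zero_iff (En_nonneg f)]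
  intro ε hε
  set m := min ε 1
  have hm0 : 0 < m := lt_min hε one_pos
  have hm1 : m ≤ 1 := min_le_right ε 1
  obtain ⟨N, hN⟩ := eventually_atTop.1 (hF.eventually_norm_taylorCoeff_le_pow (half_pos hm0))
  have hsum : ∀ z ∈ ball (0 : ℂ) 1, HasSum (fun k => taylorCoeff F k * z ^ k) (f z) :=
    fun z hz => hFf z hz ▸ hasSum_taylorCoeff_mul_pow hF.differentiableOn hz
  filter_upwards [eventually_ge_atTop N, eventually_ne_atTop 0] with n hnN hn0
  calc En f n ≤ (m / 2) ^ n / (1 - m / 2) :=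
        En_le_of_hasSum hsum (by positivity) (by linarith) fun k hk => hN k (hnN.trans hk)
    _ ≤ 2 * (m / 2) ^ n := by
        rw [div_le_iff₀ (by linarith)]
        nlinarith [pow_pos (half_pos hm0) n]
    _ ≤ m ^ n := two_mul_half_pow_le_pow hm0.le hn0
    _ ≤ ε ^ n := pow_le_pow_left₀ hm0.le (min_le_left ε 1) n

theorem stmt0 (f : ℂ → ℂ)
    (hf : AnalyticOnNhd ℂ f (Metric.ball (0 : ℂ) 1))
    (hb : BddAbove ((fun z => ‖f z‖) '' Metric.ball (0 : ℂ) 1)) :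
    Tendsto (fun n : ℕ => En f n ^ (1 / (n : ℝ))) atTop (nhds 0) ↔
      ∃ F : ℂ → ℂ, Differentiable ℂ F ∧ ∀ z ∈ Metric.ball (0 : ℂ) 1, F z = f z := by
  refine ⟨fun h => ?_, fun ⟨F, hF, hFf⟩ => tendsto_En_rpow_of_eqOn_ball hF hFf⟩
  have decay : ∀ ε > 0, ∀ᶠ n in atTop, ‖taylorCoeff f n‖ ≤ ε ^ n := fun ε hε =>
    ((tendsto_rpow_one_div_natCast_zero_iff (En_nonneg f)).1 h ε hε).mono fun n hn =>
      (norm_taylorCoeff_le_En hf hb n).trans hn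
  obtain ⟨F, hF, hsum⟩ := exists_differentiable_hasSum_of_norm_le_pow decay
  exact ⟨F, hF, fun z hz => (hsum z).unique (hasSum_taylorCoeff_mul_pow hf.differentiableOn hz)⟩
end
end

section
/- Fix p ≥ 1. Let f be analytic on the open unit disk D with finite Hardy norm ‖f‖_{H_p} := sup_{0<r<1} ((1/(2π)) ∫₀^{2π} |f(r e^{it})|^p dt)^{1/p}. Then lim_{n→∞} E_n(f)^{1/n} = 0 if and only if there exists an entire function F : ℂ → ℂ with F(z) = f(z) for all z ∈ D, where E_n(f) := inf{ ‖f − p‖_{H_p} : p a complex polynomial of degree ≤ n−1 }. -/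
open Filter MeasureTheory

noncomputable section

/-- The set of integral means defining the Hardy norm. -/
def hardyVals (p : ℝ) (f : ℂ → ℂ) : Set ℝ :=
  { y | ∃ r : ℝ, 0 < r ∧ r < 1 ∧
    y = ((1 / (2 * Real.pi)) *
      ∫ t in (0:ℝ)..(2 * Real.pi), ‖f ((r : ℂ) * Complex.exp ((t : ℂ) * Complex.I))‖ ^ p) ^ (1 / p) }

/-- The Hardy norm `‖f‖_{H_p}`. -/
def hardyNorm (p : ℝ) (f : ℂ → ℂ) : ℝ :=
  sSup (hardyVals p f)

/-- Best Hardy-norm approximation of `f` by polynomials of degree at most `n - 1`. -/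
def EnH (p : ℝ) (f : ℂ → ℂ) (n : ℕ) : ℝ :=
  sInf { e : ℝ | ∃ P : Polynomial ℂ, P.degree < (n : WithBot ℕ) ∧
    e = hardyNorm p (fun z => f z - P.eval z) }

/-!
Let `a n = f⁽ⁿ⁾(0) / n!`. Subtracting a polynomial `P` of degree `< n` does not change `a n`, so
the Cauchy estimate on the circle of radius `r < 1` followed by Jensen's inequality gives
`‖a n‖ rⁿ ≤ M_p(r, f - P) ≤ ‖f - P‖_{H_p}`, where `M_p(r, g) = hardyMean p g r` is the `p`-th
integral mean on the circle of radius `r`; letting `r → 1`, `‖a n‖ ≤ E_n(f)`. If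
`E_n(f)^{1/n} → 0`, the Taylor series of `f` therefore has infinite radius of convergence, and its
sum is the entire extension. Conversely, for every `R` the Taylor partial sums of an entire `F`
approximate it on the unit disc with error `O(R⁻ⁿ)`, hence `E_n(f) = O(R⁻ⁿ)`. Both
directions use the root-test form of the condition: `uₙ^{1/n} → 0` iff `uₙ Rⁿ` is eventually
bounded for every `R > 0`.
-/

open Metric Nat Real Polynomial Set Topology

namespace Polynomial

variable {𝕜 : Type*} [NontriviallyNormedField 𝕜]

theorem iteratedDeriv_eval_s10 (P : 𝕜[X]) (k : ℕ) :
    iteratedDeriv k (fun z => P.eval z) = fun z => (derivative^[k] P).eval z := by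
  induction k generalizing P with
  | zero => rfl
  | succ k ih =>
    rw [iteratedDeriv_succ', Function.iterate_succ_apply, ← ih]
    congr 1
    funext z
    exact P.deriv

theorem iteratedDeriv_eval_eq_zero_s10 {P : 𝕜[X]} {n : ℕ} (hP : P.degree < n) (z : 𝕜) :
    iteratedDeriv n (fun z => P.eval z) z = 0 := by
  simp only [iteratedDeriv_eval_s10, iterate_derivative_eq_zero_of_degree_lt hP, eval_zero]

end Polynomial

theorem FormalMultilinearSeries.exists_polynomial_eval_eq_partialSum {𝕜 : Type*}
    [NontriviallyNormedField 𝕜] (p : FormalMultilinearSeries 𝕜 𝕜 𝕜) (n : ℕ) :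
    ∃ P : 𝕜[X], P.degree < n ∧ ∀ z, P.eval z = p.partialSum n z := by
  refine ⟨∑ k ∈ Finset.range n, C (p.coeff k) * X ^ k, mem_degreeLT.1 ?_, fun z => ?_⟩
  · exact Submodule.sum_mem _ fun k hk => mem_degreeLT.2 <|
      (degree_C_mul_X_pow_le k _).trans_lt (mod_cast Finset.mem_range.1 hk)
  · simp only [partialSum, apply_eq_pow_smul_coeff, eval_finsetSum, eval_mul, eval_C, eval_pow,
      eval_X, smul_eq_mul, mul_comm]

theorem norm_sub_rpow_le {E : Type*} [SeminormedAddCommGroup E] (a b : E) {p : ℝ} (hp : 1 ≤ p) :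
    ‖a - b‖ ^ p ≤ 2 ^ (p - 1) * (‖a‖ ^ p + ‖b‖ ^ p) := by
  have := NNReal.rpow_add_le_mul_rpow_add_rpow ‖a‖₊ ‖b‖₊ hp
  calc ‖a - b‖ ^ p ≤ (‖a‖ + ‖b‖) ^ p := by gcongr; exact norm_sub_le a b
    _ ≤ _ := mod_cast this

theorem le_of_forall_mul_pow_le {a b : ℝ} {n : ℕ} (h : ∀ r ∈ Ioo (0 : ℝ) 1, a * r ^ n ≤ b) :
    a ≤ b := by
  have hlim : Tendsto (fun r : ℝ => a * r ^ n) (𝓝[<] 1) (𝓝 a) := by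
    simpa using (((continuous_pow n).tendsto' 1 1 (one_pow n)).const_mul a).mono_left
      nhdsWithin_le_nhds
  exact le_of_tendsto hlim (eventually_of_mem (Ioo_mem_nhdsLT zero_lt_one) h)

theorem tendsto_rpow_one_div_zero_iff {u : ℕ → ℝ} (hu : ∀ n, 0 ≤ u n) :
    Tendsto (fun n => u n ^ (1 / (n : ℝ))) atTop (𝓝 0) ↔
      ∀ R > 0, ∃ C, ∀ᶠ n in atTop, u n * R ^ n ≤ C := by
  have hroot_pow {n : ℕ} (hn : n ≠ 0) : (u n ^ (1 / (n : ℝ))) ^ n = u n := by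
    rw [one_div, rpow_inv_natCast_pow (hu n) hn]
  constructor
  · intro h R hR
    refine ⟨1, ?_⟩
    filter_upwards [h.eventually_lt_const (inv_pos.2 hR), eventually_ne_atTop 0] with n hn hn0
    have hle : u n ^ (1 / (n : ℝ)) * R ≤ 1 :=
      (mul_le_mul_of_nonneg_right hn.le hR.le).trans_eq (inv_mul_cancel₀ hR.ne')
    calc u n * R ^ n = (u n ^ (1 / (n : ℝ)) * R) ^ n := by rw [mul_pow, hroot_pow hn0]
      _ ≤ 1 := pow_le_one₀ (mul_nonneg (rpow_nonneg (hu n) _) hR.le) hle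
  · intro h
    refine tendsto_order.2 ⟨fun a ha => Eventually.of_forall fun n =>
      ha.trans_le (rpow_nonneg (hu n) _), fun ε hε => ?_⟩
    obtain ⟨C, hC⟩ := h (2 / ε) (by positivity)
    set C' := max C 1
    have hC'_root : Tendsto (fun n : ℕ => C' ^ (1 / (n : ℝ))) atTop (𝓝 1) := by
      simpa [Function.comp_def] using
        (continuousAt_const_rpow (by positivity : C' ≠ 0)).tendsto.comp
          tendsto_one_div_atTop_nhds_zero_nat
    filter_upwards [hC, hC'_root.eventually_lt_const one_lt_two, eventually_ne_atTop 0]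
      with n hn hn2 hn0
    have hun : u n ≤ C' * (ε / 2) ^ n :=
      calc u n = u n * (2 / ε) ^ n * (ε / 2) ^ n := by
            rw [mul_assoc, ← mul_pow, show 2 / ε * (ε / 2) = 1 by field_simp, one_pow, mul_one]
        _ ≤ C' * (ε / 2) ^ n := by gcongr; exact hn.trans (le_max_left _ _)
    calc u n ^ (1 / (n : ℝ)) ≤ (C' * (ε / 2) ^ n) ^ (1 / (n : ℝ)) := by gcongr; exact hu n
      _ = C' ^ (1 / (n : ℝ)) * (ε / 2) := by
        rw [mul_rpow (by positivity) (by positivity), one_div,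
          pow_rpow_inv_natCast (by positivity) hn0]
      _ < 2 * (ε / 2) := by gcongr
      _ = ε := by ring

theorem circleAverage_le_of_forall_le {f : ℂ → ℝ} {c : ℂ} {R a : ℝ} (ha : 0 ≤ a)
    (h : ∀ z ∈ sphere c |R|, f z ≤ a) : circleAverage f c R ≤ a := by
  by_cases hf : CircleIntegrable f c R
  · exact circleAverage_mono_on_of_le_circle hf h
  · rwa [circleAverage.integral_undef hf]

theorem circleAverage_rpow_le {u : ℂ → ℝ} {c : ℂ} {R p : ℝ} (hp : 1 ≤ p) (hu : ∀ z, 0 ≤ u z)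
    (hu_int : CircleIntegrable u c R) (hup_int : CircleIntegrable (fun z => u z ^ p) c R) :
    circleAverage u c R ^ p ≤ circleAverage (fun z => u z ^ p) c R := by
  simp only [circleAverage_eq_intervalAverage]
  exact (convexOn_rpow hp).map_set_average_le
    (continuousOn_id.rpow_const fun _ _ => Or.inr (by linarith)) isClosed_Ici (by simp)
    (by simp [ENNReal.mul_eq_top]) (ae_of_all _ fun θ => hu _) hu_int.def' hup_int.def'

theorem norm_iteratedDeriv_div_factorial_mul_pow_le {E : Type*} [NormedAddCommGroup E]
    [NormedSpace ℂ E] [CompleteSpace E] {g : ℂ → E} {c : ℂ} {r : ℝ} (hr : 0 < r)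
    (hg : DifferentiableOn ℂ g (closedBall c r)) (n : ℕ) :
    ‖iteratedDeriv n g c‖ / n ! * r ^ n ≤ circleAverage (‖g ·‖) c r := by
  lift r to NNReal using hr.le
  set q := cauchyPowerSeries g c r n
  have hq : iteratedDeriv n g c = n ! • q fun _ => 1 := by
    rw [(hg.hasFPowerSeriesOnBall (mod_cast hr)).factorial_smul, iteratedDeriv_eq_iteratedFDeriv]
  have hq_le : ‖q fun _ => 1‖ ≤ ‖q‖ := by simpa using q.le_opNorm fun _ => (1 : ℂ)
  calc ‖iteratedDeriv n g c‖ / n ! * r ^ n = ‖q fun _ => 1‖ * r ^ n := by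
        rw [hq, RCLike.norm_nsmul ℂ, nsmul_eq_mul,
          mul_div_cancel_left₀ _ (mod_cast n.factorial_ne_zero)]
    _ ≤ circleAverage (‖g ·‖) c r * |(r : ℝ)|⁻¹ ^ n * r ^ n := by
        gcongr
        exact hq_le.trans (norm_cauchyPowerSeries_le g c r n)
    _ = circleAverage (‖g ·‖) c r := by
        rw [NNReal.abs_eq, mul_assoc, ← mul_pow, inv_mul_cancel₀ (mod_cast hr.ne'), one_pow,
          mul_one]

theorem exists_differentiable_eqOn_ball_of_forall_mul_pow_le {f : ℂ → ℂ} {r : ℝ}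
    (hf : DifferentiableOn ℂ f (ball 0 r))
    (h : ∀ R > 0, ∃ C, ∀ᶠ n in atTop, ‖iteratedDeriv n f 0‖ / n ! * R ^ n ≤ C) :
    ∃ F : ℂ → ℂ, Differentiable ℂ F ∧ EqOn F f (ball 0 r) := by
  set q := FormalMultilinearSeries.ofScalars ℂ fun n => (n ! : ℂ)⁻¹ * iteratedDeriv n f 0
  have hq : q.radius = ⊤ := by
    refine ENNReal.eq_top_of_forall_nnreal_le fun R => ?_
    rcases eq_or_ne R 0 with rfl | hR
    · simp
    obtain ⟨C, hC⟩ := h R (by positivity)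
    refine q.le_radius_of_eventually_le C (hC.mono fun n hn => ?_)
    simpa [q, div_eq_inv_mul] using hn
  have hsum := q.hasFPowerSeriesOnBall (hq ▸ ENNReal.zero_lt_top)
  refine ⟨q.sum, fun z => (hsum.analyticAt_of_mem (by simp [hq])).differentiableAt,
    fun z hz => ((Complex.hasSum_taylorSeries_on_ball hf hz).unique ?_).symm⟩
  convert hsum.hasSum (y := z) (by simp [hq]) using 1
  · ext n
    simp only [q, FormalMultilinearSeries.ofScalars_apply_eq, smul_eq_mul, sub_zero]
    ring
  · rw [zero_add]

theorem Differentiable.exists_forall_norm_sub_eval_le {F : ℂ → ℂ} (hF : Differentiable ℂ F)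
    {R : ℝ} (hR : 0 < R) : ∃ C, ∀ n : ℕ, ∃ P : ℂ[X], P.degree < n ∧
      ∀ z ∈ ball 0 1, ‖F z - P.eval z‖ ≤ C * R⁻¹ ^ n := by
  obtain ⟨a, ha, C, hC0, hC⟩ := (hF.hasFPowerSeriesOnBall 0 one_pos).uniform_geometric_approx'
    (r' := (R + 1).toNNReal) ENNReal.coe_lt_top
  have hR1 : ((R + 1).toNNReal : ℝ) = R + 1 := Real.coe_toNNReal _ (by positivity)
  refine ⟨C, fun n => ?_⟩
  obtain ⟨P, hP, hPeval⟩ :=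
    (cauchyPowerSeries F 0 (1 : NNReal)).exists_polynomial_eval_eq_partialSum n
  refine ⟨P, hP, fun z hz => ?_⟩
  rw [mem_ball_zero_iff] at hz
  have hFP := hC z (mem_ball_zero_iff.2 (by rw [hR1]; linarith)) n
  rw [zero_add, ← hPeval, hR1] at hFP
  refine hFP.trans (mul_le_mul_of_nonneg_left (pow_le_pow_left₀
    (mul_nonneg ha.1.le (by positivity)) ?_ n) hC0.le)
  calc a * (‖z‖ / (R + 1)) ≤ 1 * (1 / (R + 1)) := by gcongr; exact ha.2.le
    _ ≤ R⁻¹ := by rw [one_mul, one_div]; exact inv_anti₀ hR (by linarith)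

theorem sphere_abs_subset_ball {r : ℝ} (hr : r ∈ Ioo 0 1) : sphere (0 : ℂ) |r| ⊆ ball 0 1 := by
  rw [abs_of_pos hr.1]
  exact sphere_subset_ball hr.2

section Hardy

def hardyMean (p : ℝ) (g : ℂ → ℂ) (r : ℝ) : ℝ :=
  circleAverage (fun z => ‖g z‖ ^ p) 0 r ^ (1 / p)

theorem hardyVals_eq_image (p : ℝ) (g : ℂ → ℂ) : hardyVals p g = hardyMean p g '' Ioo 0 1 := by
  ext y
  simp [hardyVals, hardyMean, circleAverage_def, circleMap, eq_comm, and_assoc]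

theorem hardyMean_nonneg (p : ℝ) (g : ℂ → ℂ) (r : ℝ) : 0 ≤ hardyMean p g r :=
  rpow_nonneg (circleAverage_nonneg_of_nonneg fun _ _ => by positivity) _

theorem hardyNorm_nonneg (p : ℝ) (g : ℂ → ℂ) : 0 ≤ hardyNorm p g := by
  refine Real.sSup_nonneg ?_
  rw [hardyVals_eq_image]
  rintro _ ⟨r, -, rfl⟩
  exact hardyMean_nonneg p g r

theorem EnH_nonneg (p : ℝ) (f : ℂ → ℂ) (n : ℕ) : 0 ≤ EnH p f n :=
  Real.sInf_nonneg (by rintro _ ⟨P, -, rfl⟩; exact hardyNorm_nonneg p _)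

variable {p : ℝ} {f g : ℂ → ℂ}

theorem hardyMean_le_hardyNorm (hb : BddAbove (hardyVals p g)) {r : ℝ} (hr : r ∈ Ioo 0 1) :
    hardyMean p g r ≤ hardyNorm p g :=
  le_csSup hb (by rw [hardyVals_eq_image]; exact mem_image_of_mem _ hr)

theorem hardyNorm_le_of_forall_norm_le (hp : 0 < p) {B : ℝ} (h : ∀ z ∈ ball 0 1, ‖g z‖ ≤ B) :
    hardyNorm p g ≤ B := by
  have hB : 0 ≤ B := (norm_nonneg _).trans (h 0 (mem_ball_self one_pos))
  refine Real.sSup_le ?_ hB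
  rw [hardyVals_eq_image]
  rintro _ ⟨r, hr, rfl⟩
  calc hardyMean p g r ≤ (B ^ p) ^ (1 / p) := by
        refine rpow_le_rpow (circleAverage_nonneg_of_nonneg fun _ _ => by positivity) ?_
          (by positivity)
        refine circleAverage_le_of_forall_le (by positivity) fun z hz => ?_
        gcongr
        exact h z (sphere_abs_subset_ball hr hz)
    _ = B := by rw [← rpow_mul hB, mul_one_div_cancel hp.ne', rpow_one]

theorem bddAbove_hardyVals_sub (hp : 1 ≤ p) {q : ℂ → ℂ} (hf : ContinuousOn f (ball 0 1))
    (hq : ContinuousOn q (ball 0 1)) {C : ℝ} (hC : ∀ z ∈ ball 0 1, ‖q z‖ ≤ C)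
    (hb : BddAbove (hardyVals p f)) : BddAbove (hardyVals p (f - q)) := by
  have hp0 : 0 < p := one_pos.trans_le hp
  obtain ⟨M, hM⟩ := hb
  rw [hardyVals_eq_image, mem_upperBounds, forall_mem_image] at hM
  rw [hardyVals_eq_image]
  refine ⟨(2 ^ (p - 1) * (M ^ p + C ^ p)) ^ (1 / p), ?_⟩
  rintro _ ⟨r, hr, rfl⟩
  have hsphere := sphere_abs_subset_ball hr
  have hint {u : ℂ → ℝ} (hu : ContinuousOn u (ball 0 1)) : CircleIntegrable u 0 r :=
    (hu.mono hsphere).circleIntegrable'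
  have hpow {u : ℂ → ℂ} (hu : ContinuousOn u (ball 0 1)) :
      ContinuousOn (fun z => ‖u z‖ ^ p) (ball 0 1) :=
    hu.norm.rpow_const fun _ _ => Or.inr hp0.le
  have hfM : circleAverage (fun z => ‖f z‖ ^ p) 0 r ≤ M ^ p := by
    rw [← rpow_inv_le_iff_of_pos (circleAverage_nonneg_of_nonneg fun _ _ => by positivity)
      ((hardyMean_nonneg p f r).trans (hM hr)) hp0, ← one_div]
    exact hM hr
  refine rpow_le_rpow (circleAverage_nonneg_of_nonneg fun _ _ => by positivity) ?_
    (by positivity)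
  calc circleAverage (fun z => ‖(f - q) z‖ ^ p) 0 r
      ≤ circleAverage (fun z => 2 ^ (p - 1) * (‖f z‖ ^ p + C ^ p)) 0 r := by
        refine circleAverage_mono (hint (hpow (hf.sub hq)))
          (hint (continuousOn_const.mul ((hpow hf).add continuousOn_const))) fun z hz => ?_
        refine (norm_sub_rpow_le (f z) (q z) hp).trans ?_
        gcongr
        exact hC z (hsphere hz)
    _ = 2 ^ (p - 1) * (circleAverage (fun z => ‖f z‖ ^ p) 0 r + C ^ p) := by
        simp only [← smul_eq_mul, circleAverage_fun_smul]
        rw [circleAverage_fun_add (hint (hpow hf)) (circleIntegrable_const _ _ _),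
          circleAverage_const]
    _ ≤ 2 ^ (p - 1) * (M ^ p + C ^ p) := by gcongr

theorem norm_iteratedDeriv_div_factorial_le_hardyNorm_sub (hp : 1 ≤ p)
    (hf : AnalyticOnNhd ℂ f (ball 0 1)) (hb : BddAbove (hardyVals p f)) {n : ℕ} {P : ℂ[X]}
    (hP : P.degree < n) :
    ‖iteratedDeriv n f 0‖ / n ! ≤ hardyNorm p (fun z => f z - P.eval z) := by
  set g : ℂ → ℂ := fun z => f z - P.eval z
  have hg : DifferentiableOn ℂ g (ball 0 1) :=
    hf.differentiableOn.sub P.differentiable.differentiableOn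
  have hgn : iteratedDeriv n g 0 = iteratedDeriv n f 0 := by
    change iteratedDeriv n (f - fun z => P.eval z) 0 = _
    rw [iteratedDeriv_sub (hf 0 (mem_ball_self one_pos)).contDiffAt
      (P.differentiable.analyticAt 0).contDiffAt, iteratedDeriv_eval_eq_zero_s10 hP, sub_zero]
  obtain ⟨C, hC⟩ := (isCompact_closedBall (0 : ℂ) 1).exists_bound_of_continuousOn
    P.continuous.continuousOn
  have hbg : BddAbove (hardyVals p g) :=
    bddAbove_hardyVals_sub hp hf.continuousOn P.continuous.continuousOn
      (fun z hz => hC z (ball_subset_closedBall hz)) hb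
  refine le_of_forall_mul_pow_le (n := n) fun r hr => ?_
  have hg_cont : ContinuousOn (‖g ·‖) (sphere 0 |r|) :=
    hg.continuousOn.norm.mono (sphere_abs_subset_ball hr)
  have hgp_int : CircleIntegrable (fun z => ‖g z‖ ^ p) 0 r :=
    (hg_cont.rpow_const fun _ _ => Or.inr (by linarith)).circleIntegrable'
  calc ‖iteratedDeriv n f 0‖ / n ! * r ^ n = ‖iteratedDeriv n g 0‖ / n ! * r ^ n := by rw [hgn]
    _ ≤ circleAverage (‖g ·‖) 0 r :=
        norm_iteratedDeriv_div_factorial_mul_pow_le hr.1 (hg.mono (closedBall_subset_ball hr.2)) n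
    _ ≤ hardyMean p g r := by
        rw [hardyMean, one_div, le_rpow_inv_iff_of_pos
          (circleAverage_nonneg_of_nonneg fun _ _ => norm_nonneg _)
          (circleAverage_nonneg_of_nonneg fun _ _ => by positivity) (by linarith)]
        exact circleAverage_rpow_le hp (fun _ => norm_nonneg _) hg_cont.circleIntegrable' hgp_int
    _ ≤ hardyNorm p g := hardyMean_le_hardyNorm hbg hr

theorem EnH_le_hardyNorm_sub {n : ℕ} {P : ℂ[X]} (hP : P.degree < n) :
    EnH p f n ≤ hardyNorm p (fun z => f z - P.eval z) :=
  csInf_le ⟨0, by rintro _ ⟨Q, -, rfl⟩; exact hardyNorm_nonneg p _⟩ ⟨P, hP, rfl⟩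

theorem norm_iteratedDeriv_div_factorial_le_EnH (hp : 1 ≤ p) (hf : AnalyticOnNhd ℂ f (ball 0 1))
    (hb : BddAbove (hardyVals p f)) (n : ℕ) : ‖iteratedDeriv n f 0‖ / n ! ≤ EnH p f n := by
  refine le_csInf ⟨_, 0, by simp, rfl⟩ ?_
  rintro _ ⟨P, hP, rfl⟩
  exact norm_iteratedDeriv_div_factorial_le_hardyNorm_sub hp hf hb hP

end Hardy

theorem stmt10 (p : ℝ) (hp : 1 ≤ p) (f : ℂ → ℂ)
    (hf : AnalyticOnNhd ℂ f (Metric.ball (0 : ℂ) 1))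
    (hb : BddAbove (hardyVals p f)) :
    Tendsto (fun n : ℕ => EnH p f n ^ (1 / (n : ℝ))) atTop (nhds 0) ↔
      ∃ F : ℂ → ℂ, Differentiable ℂ F ∧ ∀ z ∈ Metric.ball (0 : ℂ) 1, F z = f z := by
  rw [tendsto_rpow_one_div_zero_iff (EnH_nonneg p f)]
  constructor
  · intro hE
    have hcoeff (R : ℝ) (hR : 0 < R) :
        ∃ C, ∀ᶠ n in atTop, ‖iteratedDeriv n f 0‖ / n ! * R ^ n ≤ C := by
      obtain ⟨C, hC⟩ := hE R hR
      refine ⟨C, hC.mono fun n hn => le_trans ?_ hn⟩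
      gcongr
      exact norm_iteratedDeriv_div_factorial_le_EnH hp hf hb n
    obtain ⟨F, hF, hFf⟩ :=
      exists_differentiable_eqOn_ball_of_forall_mul_pow_le hf.differentiableOn hcoeff
    exact ⟨F, hF, fun z hz => hFf hz⟩
  · rintro ⟨F, hF, hFf⟩ R hR
    obtain ⟨C, hC⟩ := hF.exists_forall_norm_sub_eval_le hR
    refine ⟨C, Eventually.of_forall fun n => ?_⟩
    obtain ⟨P, hP, hFP⟩ := hC n
    have hE : EnH p f n ≤ C * R⁻¹ ^ n :=
      (EnH_le_hardyNorm_sub hP).trans <| hardyNorm_le_of_forall_norm_le (by linarith)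
        fun z hz => hFf z hz ▸ hFP z hz
    calc EnH p f n * R ^ n ≤ C * R⁻¹ ^ n * R ^ n := by gcongr
      _ = C := by rw [mul_assoc, ← mul_pow, inv_mul_cancel₀ hR.ne', one_pow, mul_one]
end
end
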